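/- arXiv:2404.05860 — 2 statements merged into one kernel-verified Lean document; each statement's English description precedes it below -/
import Mathlib

section
/- For all complex numbers x, y with |x| < 1/4 and |y| < 1/4, the double series Σ_{α=0}^{∞} Σ_{β=0}^{∞} (binomial(α+β, α))² x^α y^β converges and equals (1 − 2(x+y) + (x−y)²)^{−1/2}, where the principal branch of the square root is used. -/
/-!
By Vandermonde, `C(α+β,α)² = ∑ₘ C(α+β,α) C(α,m) C(β,m)`, and since `C(α+β,α)² ≤ 4^(α+β)` the
family of these terms times `x^α y^β`, indexed by `(α, β, m)`, is absolutely summable for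
`|x|, |y| < 1/4`. Summing it in the other order, over `α = a + m`, `β = b + m` for fixed `m`,
the multinomial identity
`C(a+b+2m, a+m) C(a+m, m) C(b+m, m) = C(a+b+2m, 2m) C(2m, m) C(a+b, a)`
and the binomial theorem give `C(2m,m) (xy)^m / (1-x-y)^(2m+1)`. The central binomial series
`∑ C(2m,m) w^m = (1-4w)^(-1/2)` then sums these to `((1-x-y)² - 4xy)^(-1/2)`; the principal
branches agree because `1 - x - y` lies in the sector `|arg| < π/4`.
-/

open Finset Nat

theorem Nat.sum_range_choose_mul_choose (a b : ℕ) :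
    ∑ i ∈ range (a + 1), a.choose i * b.choose i = (a + b).choose a := by
  rw [add_comm a b, add_choose_eq, Nat.sum_antidiagonal_eq_sum_range_succ_mk]
  refine sum_congr rfl fun i hi => ?_
  rw [mul_comm, choose_symm (mem_range_succ_iff.mp hi)]

theorem Nat.add_choose_mul_choose_mul_choose (a b m : ℕ) :
    (a + m + (b + m)).choose (a + m) * (a + m).choose m * (b + m).choose m
      = (a + b + 2 * m).choose (2 * m) * m.centralBinom * (a + b).choose a := by
  refine Nat.eq_of_mul_eq_mul_right (by positivity : 0 < a ! * b ! * m ! * m !) ?_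
  calc _ = (a + m + (b + m)).choose (b + m) * ((a + m).choose m * a ! * m !)
          * ((b + m).choose m * b ! * m !) := by rw [choose_symm_add]; ring
    _ = (a + m + (b + m))! := by
      rw [add_choose_mul_factorial_mul_factorial, add_choose_mul_factorial_mul_factorial,
        add_choose_mul_factorial_mul_factorial]
    _ = (a + b + 2 * m)! := by congr 1; omega
    _ = (a + b + 2 * m).choose (2 * m) * ((a + b).choose b * a ! * b !)
          * ((m + m).choose m * m ! * m !) := by
      rw [add_choose_mul_factorial_mul_factorial, add_choose_mul_factorial_mul_factorial,
        ← two_mul, add_choose_mul_factorial_mul_factorial]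
    _ = _ := by rw [← choose_symm_add (a := a), centralBinom, two_mul]; ring

section CharZero

variable {K : Type*} [Field K] [CharZero K]

theorem ascPochhammer_eval_half_mul_four_pow (n : ℕ) :
    (ascPochhammer K n).eval (1 / 2) * 4 ^ n = n ! * n.centralBinom := by
  induction n with
  | zero => simp
  | succ n ih =>
    have h : ((n + 1 : ℕ) : K) * (n + 1).centralBinom = 2 * (2 * n + 1) * n.centralBinom := by
      exact_mod_cast Nat.succ_mul_centralBinom_succ n
    rw [ascPochhammer_succ_eval, factorial_succ, Nat.cast_mul]
    linear_combination (4 * (1 / 2 + n : K)) * ih - (n ! : K) * h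

theorem Ring.choose_half_add_sub_one (n : ℕ) :
    Ring.choose ((1 / 2 : K) + n - 1) n = n.centralBinom / 4 ^ n := by
  have h := Ring.factorial_nsmul_multichoose_eq_ascPochhammer (1 / 2 : K) n
  rw [Polynomial.ascPochhammer_smeval_eq_eval, nsmul_eq_mul] at h
  rw [← Ring.multichoose_eq, eq_div_iff (pow_ne_zero n (by norm_num : (4 : K) ≠ 0))]
  refine mul_left_cancel₀ (Nat.cast_ne_zero.mpr (factorial_ne_zero n) : (n ! : K) ≠ 0) ?_
  linear_combination (4 ^ n : K) * h + ascPochhammer_eval_half_mul_four_pow (K := K) n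

end CharZero

theorem hasSum_centralBinom_mul_pow {w : ℂ} (hw : ‖w‖ < 1 / 4) :
    HasSum (fun n ↦ (n.centralBinom : ℂ) * w ^ n) ((1 - 4 * w) ^ (1 / 2 : ℂ))⁻¹ := by
  have h4w : 4 * w ∈ Metric.eball (0 : ℂ) 1 := by
    rw [← ENNReal.ofReal_one, Metric.eball_ofReal, mem_ball_zero_iff, norm_mul,
      Complex.norm_ofNat]
    linarith
  have h := (Complex.one_div_one_sub_cpow_hasFPowerSeriesOnBall_zero (1 / 2)).hasSum h4w
  simp only [FormalMultilinearSeries.ofScalars_apply_eq, zero_add, Ring.choose_half_add_sub_one,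
    smul_eq_mul, mul_pow, ← mul_assoc] at h
  rw [one_div] at h
  simpa only [div_mul_cancel₀ _ (pow_ne_zero _ (by norm_num : (4 : ℂ) ≠ 0))] using h

section CommSemiring

variable {R : Type*} [CommSemiring R]

theorem sum_antidiagonal_choose_mul_pow_mul_pow (c : ℕ → R) (x y : R) (n : ℕ) :
    ∑ p ∈ antidiagonal n, c (p.1 + p.2) * (p.1 + p.2).choose p.1 * x ^ p.1 * y ^ p.2
      = c n * (x + y) ^ n := by
  rw [(Commute.all x y).add_pow', mul_sum]
  refine sum_congr rfl fun p hp => ?_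
  rw [mem_antidiagonal.mp hp, nsmul_eq_mul]
  ring

def chooseSqTerm (x y : R) (q : (ℕ × ℕ) × ℕ) : R :=
  (q.1.1 + q.1.2).choose q.1.1 * q.1.1.choose q.2 * q.1.2.choose q.2 * x ^ q.1.1 * y ^ q.1.2

theorem hasSum_chooseSqTerm_sum_index [TopologicalSpace R] (x y : R) (p : ℕ × ℕ) :
    HasSum (fun m ↦ chooseSqTerm x y (p, m))
      ((p.1 + p.2).choose p.1 ^ 2 * x ^ p.1 * y ^ p.2) := by
  have hsum : ∑ m ∈ range (p.1 + 1), chooseSqTerm x y (p, m)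
      = (p.1 + p.2).choose p.1 ^ 2 * x ^ p.1 * y ^ p.2 := by
    have h := congrArg (Nat.cast (R := R)) (Nat.sum_range_choose_mul_choose p.1 p.2)
    push_cast at h
    calc _ = ∑ m ∈ range (p.1 + 1), ((p.1 + p.2).choose p.1 * x ^ p.1 * y ^ p.2 : R)
            * (p.1.choose m * p.2.choose m) :=
          sum_congr rfl fun m _ ↦ by simp only [chooseSqTerm]; ring
      _ = _ := by rw [← mul_sum, h]; ring
  refine hsum ▸ hasSum_sum_of_ne_finset_zero fun m hm ↦ ?_
  rw [chooseSqTerm, Nat.choose_eq_zero_of_lt (n := p.1) (by simpa using hm)]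
  simp

end CommSemiring

section RCLike

variable {K : Type*} [RCLike K]

theorem hasSum_choose_mul_pow_mul_pow {c : ℕ → K} {x y S : K}
    (hc : Summable fun n ↦ ‖c n‖ * (‖x‖ + ‖y‖) ^ n) (hS : HasSum (fun n ↦ c n * (x + y) ^ n) S) :
    HasSum (fun p : ℕ × ℕ ↦ c (p.1 + p.2) * (p.1 + p.2).choose p.1 * x ^ p.1 * y ^ p.2) S := by
  set f := fun p : ℕ × ℕ ↦ c (p.1 + p.2) * (p.1 + p.2).choose p.1 * x ^ p.1 * y ^ p.2
  have hfib (n : ℕ) : HasSum (fun q : antidiagonal n ↦ f q) (c n * (x + y) ^ n) := by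
    convert hasSum_fintype _
    rw [sum_coe_sort _ (fun q ↦ f q), sum_antidiagonal_choose_mul_pow_mul_pow]
  have hnorm (n : ℕ) : ∑' q : antidiagonal n, ‖f q‖ = ‖c n‖ * (‖x‖ + ‖y‖) ^ n := by
    rw [tsum_fintype, sum_coe_sort _ (fun q ↦ ‖f q‖),
      ← sum_antidiagonal_choose_mul_pow_mul_pow (fun n ↦ ‖c n‖)]
    refine sum_congr rfl fun q _ ↦ ?_
    simp only [f, norm_mul, norm_pow, RCLike.norm_natCast]
  rw [← HasAntidiagonal.sigmaAntidiagonalEquivProd.hasSum_iff]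
  refine hS.sigma_of_hasSum hfib (Summable.of_norm ?_)
  refine (summable_sigma_of_nonneg fun _ ↦ norm_nonneg _).mpr
    ⟨fun n ↦ Summable.of_finite, ?_⟩
  exact hc.congr fun n ↦ (hnorm n).symm

theorem hasSum_add_choose_mul_choose_mul_pow_mul_pow (k : ℕ) {x y : K} (h : ‖x‖ + ‖y‖ < 1) :
    HasSum (fun p : ℕ × ℕ ↦
        ((p.1 + p.2 + k).choose k : K) * (p.1 + p.2).choose p.1 * x ^ p.1 * y ^ p.2)
      (1 / (1 - (x + y)) ^ (k + 1)) := by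
  refine hasSum_choose_mul_pow_mul_pow (c := fun n ↦ ((n + k).choose k : K)) ?_
    (hasSum_choose_mul_geometric_of_norm_lt_one k ((norm_add_le x y).trans_lt h))
  have hr : ‖‖x‖ + ‖y‖‖ < 1 := by rwa [Real.norm_of_nonneg (by positivity)]
  simpa only [RCLike.norm_natCast] using summable_choose_mul_geometric_of_norm_lt_one k hr

theorem hasSum_chooseSqTerm_sum_pair {x y : K} (h : ‖x‖ + ‖y‖ < 1) (m : ℕ) :
    HasSum (fun p ↦ chooseSqTerm x y (p, m))
      (m.centralBinom * (x * y) ^ m / (1 - (x + y)) ^ (2 * m + 1)) := by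
  set shift : ℕ × ℕ → ℕ × ℕ := fun q ↦ (q.1 + m, q.2 + m)
  have hshift : Function.Injective shift := fun q q' hqq' ↦ by
    simp only [shift, Prod.mk.injEq, Nat.add_right_cancel_iff] at hqq'
    exact Prod.ext hqq'.1 hqq'.2
  have hzero (p : ℕ × ℕ) (hp : p ∉ Set.range shift) : chooseSqTerm x y (p, m) = 0 := by
    have : p.1 < m ∨ p.2 < m := by
      by_contra! hle
      exact hp ⟨(p.1 - m, p.2 - m),
        Prod.ext (Nat.sub_add_cancel hle.1) (Nat.sub_add_cancel hle.2)⟩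
    rcases this with hlt | hlt <;> simp [chooseSqTerm, Nat.choose_eq_zero_of_lt hlt]
  have hterm : (fun p ↦ chooseSqTerm x y (p, m)) ∘ shift = fun q ↦ m.centralBinom * (x * y) ^ m
      * (((q.1 + q.2 + 2 * m).choose (2 * m) : K) * (q.1 + q.2).choose q.1 * x ^ q.1 * y ^ q.2) := by
    funext q
    have e := congrArg (Nat.cast (R := K)) (Nat.add_choose_mul_choose_mul_choose q.1 q.2 m)
    push_cast at e
    simp only [Function.comp, shift, chooseSqTerm]
    linear_combination (x ^ (q.1 + m) * y ^ (q.2 + m)) * e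
  rw [← hshift.hasSum_iff hzero, hterm, div_eq_mul_one_div]
  exact (hasSum_add_choose_mul_choose_mul_pow_mul_pow (2 * m) h).mul_left _

theorem summable_chooseSqTerm {x y : K} (hx : ‖x‖ < 1 / 4) (hy : ‖y‖ < 1 / 4) :
    Summable (chooseSqTerm x y) := by
  refine Summable.of_norm ?_
  have hnorm (q : (ℕ × ℕ) × ℕ) : ‖chooseSqTerm x y q‖ = chooseSqTerm ‖x‖ ‖y‖ q := by
    simp only [chooseSqTerm, norm_mul, norm_pow, RCLike.norm_natCast]
  simp only [hnorm]
  refine (summable_prod_of_nonneg fun q ↦ by unfold chooseSqTerm; positivity).mpr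
    ⟨fun p ↦ (hasSum_chooseSqTerm_sum_index _ _ p).summable, ?_⟩
  simp only [(hasSum_chooseSqTerm_sum_index _ _ _).tsum_eq]
  have geom (z : K) (hz : ‖z‖ < 1 / 4) : Summable fun n ↦ (4 * ‖z‖) ^ n :=
    summable_geometric_of_lt_one (by positivity) (by linarith)
  refine ((geom x hx).mul_of_nonneg (geom y hy) (fun _ ↦ by positivity) (fun _ ↦ by positivity))
    |>.of_nonneg_of_le (fun _ ↦ by positivity) fun p ↦ ?_
  have hchoose : ((p.1 + p.2).choose p.1 : ℝ) ^ 2 ≤ 4 ^ p.1 * 4 ^ p.2 := by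
    rw [← pow_add, show (4 : ℝ) = 2 ^ 2 by norm_num, ← pow_mul, mul_comm 2, pow_mul]
    gcongr
    exact_mod_cast Nat.choose_le_two_pow _ _
  calc _ ≤ (4 ^ p.1 * 4 ^ p.2 : ℝ) * ‖x‖ ^ p.1 * ‖y‖ ^ p.2 := by gcongr
    _ = _ := by ring

end RCLike

namespace Complex

theorem mul_cpow_of_re_pos {u v : ℂ} (hu : 0 < u.re) (hv : 0 < v.re) (a : ℂ) :
    (u * v) ^ a = u ^ a * v ^ a := by
  have hu0 : u ≠ 0 := fun h ↦ by simp [h] at hu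
  have hv0 : v ≠ 0 := fun h ↦ by simp [h] at hv
  obtain ⟨hu₁, hu₂⟩ := abs_lt.mp (abs_arg_lt_pi_div_two_iff.mpr (Or.inl hu))
  obtain ⟨hv₁, hv₂⟩ := abs_lt.mp (abs_arg_lt_pi_div_two_iff.mpr (Or.inl hv))
  rw [cpow_def_of_ne_zero (mul_ne_zero hu0 hv0), cpow_def_of_ne_zero hu0, cpow_def_of_ne_zero hv0,
    (log_mul_eq_add_log_iff hu0 hv0).mpr ⟨by linarith, by linarith⟩, add_mul, exp_add]

theorem sq_mul_cpow_half {c v : ℂ} (hc : |c.im| < c.re) (hv : 0 < v.re) :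
    (c ^ 2 * v) ^ (1 / 2 : ℂ) = c * v ^ (1 / 2 : ℂ) := by
  have hc2 : 0 < (c ^ 2).re := by
    rw [sq, mul_re]
    nlinarith [abs_nonneg c.im, sq_abs c.im]
  rw [mul_cpow_of_re_pos hc2 hv, one_div, sq_cpow_two_inv (by linarith [abs_nonneg c.im])]

end Complex

open Complex in
theorem hasSum_centralBinom_mul_pow_div_pow {x y : ℂ} (hx : ‖x‖ < 1 / 4) (hy : ‖y‖ < 1 / 4) :
    HasSum (fun m ↦ m.centralBinom * (x * y) ^ m / (1 - (x + y)) ^ (2 * m + 1))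
      ((1 - 2 * (x + y) + (x - y) ^ 2) ^ (-(1 / 2 : ℂ))) := by
  set c := 1 - (x + y)
  have hs : ‖x + y‖ < 1 / 2 := (norm_add_le x y).trans_lt (by linarith)
  have hc_re : 1 / 2 < c.re := by
    have := re_le_norm (x + y)
    simp only [c, sub_re, one_re]
    linarith
  have hc : |c.im| < c.re := by
    have := abs_im_le_norm (x + y)
    simp only [c, sub_im, one_im, zero_sub, abs_neg]
    linarith
  have hc0 : c ≠ 0 := fun h ↦ by rw [h, zero_re] at hc_re; linarith
  set w := x * y / c ^ 2
  have hw : ‖w‖ < 1 / 4 := by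
    have hc_norm : 1 / 2 < ‖c‖ := hc_re.trans_le (re_le_norm c)
    rw [norm_div, norm_mul, norm_pow, div_lt_iff₀ (by positivity)]
    nlinarith [norm_nonneg x, norm_nonneg y, mul_le_mul hx.le hy.le (norm_nonneg y) (by norm_num)]
  have hv : 0 < (1 - 4 * w).re := by
    have := re_le_norm (4 * w)
    rw [norm_mul, norm_ofNat] at this
    rw [sub_re, one_re]
    linarith
  have key : c ^ 2 * (1 - 4 * w) = 1 - 2 * (x + y) + (x - y) ^ 2 := by
    rw [mul_sub, mul_one, mul_left_comm, mul_div_cancel₀ _ (pow_ne_zero 2 hc0)]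
    ring
  rw [← key, cpow_neg, sq_mul_cpow_half hc hv, mul_inv]
  have hterm : (fun m ↦ m.centralBinom * (x * y) ^ m / c ^ (2 * m + 1))
      = fun m ↦ c⁻¹ * (m.centralBinom * w ^ m) := by
    funext m
    simp only [w, div_pow, pow_succ, pow_mul]
    field_simp
  rw [hterm]
  exact (hasSum_centralBinom_mul_pow hw).mul_left c⁻¹

/-- For `|x| < 1/4` and `|y| < 1/4`, the double series
`Σ_{α,β≥0} C(α+β,α)² x^α y^β` converges to `(1 - 2(x+y) + (x-y)²)^{-1/2}`
(principal branch of the square root / complex power). -/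
theorem binomial_square_gen_fun (x y : ℂ)
    (hx : ‖x‖ < 1 / 4) (hy : ‖y‖ < 1 / 4) :
    HasSum
      (fun p : ℕ × ℕ =>
        ((Nat.choose (p.1 + p.2) p.1 : ℂ)) ^ 2 * x ^ p.1 * y ^ p.2)
      ((1 - 2 * (x + y) + (x - y) ^ 2) ^ (-(1 / 2 : ℂ))) := by
  have hT := summable_chooseSqTerm hx hy
  have hsum : ∑' q, chooseSqTerm x y q = (1 - 2 * (x + y) + (x - y) ^ 2) ^ (-(1 / 2 : ℂ)) := by
    rw [← (Equiv.prodComm _ _).tsum_eq]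
    refine (HasSum.unique ?_ (hasSum_centralBinom_mul_pow_div_pow hx hy))
    exact ((Equiv.prodComm _ _).summable_iff.mpr hT).hasSum.prod_fiberwise
      (hasSum_chooseSqTerm_sum_pair (by linarith))
  exact hsum ▸ hT.hasSum.prod_fiberwise (hasSum_chooseSqTerm_sum_index x y)
end

section
/- Fix an integer r ≥ 1 and nonnegative real numbers x₁,…,x_r with √x₁ + ⋯ + √x_r < 1. Then the series M = Σ over (α₁,…,α_r) ∈ ℕ^r of ((α₁+⋯+α_r)!/(α₁!⋯α_r!))² · x₁^{α₁}⋯x_r^{α_r} converges, and for every real w with 0 ≤ w·M < 1 one has Σ over (k₁,…,k_r,j) ∈ ℕ^{r+1} of Ã_r(k₁,…,k_r,j) · x₁^{k₁}⋯x_r^{k_r} · w^j = 1/( M^{−1} − w ). -/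
open Finset



/-- The generalized Pinsky array: for `r ≥ 1`, lengths `k : Fin r → ℕ` and `j`,
`Ã_r(k₁,…,k_r,j)` is the sum over all `r` families `(α_s(0),…,α_s(j))` of nonnegative
integers with `Σ_i α_s(i) = k_s`, of `∏_{i=0}^{j} (multinomial(α₁(i),…,α_r(i)))²`. -/
def Atilde (r : ℕ) (k : Fin r → ℕ) (j : ℕ) : ℕ :=
  ∑ α ∈ Fintype.piFinset (fun s : Fin r => Finset.Nat.antidiagonalTuple (j + 1) (k s)),
    ∏ i : Fin (j + 1), (Nat.multinomial Finset.univ (fun s : Fin r => α s i)) ^ 2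

set_option maxHeartbeats 1000000 in
lemma hasSum_prod_pow {X : Type*} {f : X → ℝ} {M : ℝ} (hf : HasSum f M) (h0 : ∀ a, 0 ≤ f a) :
    ∀ m : ℕ, HasSum (fun β : Fin m → X => ∏ i, f (β i)) (M ^ m) := by
  intro m
  induction m with
  | zero =>
      have h := hasSum_single (f := fun β : Fin 0 → X => ∏ i, f (β i))
        (default : Fin 0 → X) (fun b hb => absurd (Subsingleton.elim b default) hb)
      simpa using h
  | succ m ih =>
      have hsum2 : Summable (fun p : X × (Fin m → X) => f p.1 * ∏ i, f (p.2 i)) := by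
        apply Summable.mul_of_nonneg hf.summable ih.summable
        · exact h0
        · exact fun β => Finset.prod_nonneg fun i _ => h0 _
      have h := hf.mul ih hsum2
      let e : X × (Fin m → X) ≃ (Fin (m + 1) → X) := Fin.consEquiv (fun _ : Fin (m + 1) => X)
      have h2 : HasSum ((fun β : Fin (m + 1) → X => ∏ i, f (β i)) ∘ e) (M ^ (m + 1)) := by
        have : ((fun β : Fin (m + 1) → X => ∏ i, f (β i)) ∘ e)
            = fun p : X × (Fin m → X) => f p.1 * ∏ i, f (p.2 i) := by
          funext p
          simp only [Function.comp_apply]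
          rw [show e p = Fin.cons (α := fun _ => X) p.1 p.2 from rfl, Fin.prod_univ_succ]
          simp
        rw [this, pow_succ, mul_comm]
        exact h
      exact e.hasSum_iff.mp h2

set_option maxHeartbeats 1000000 in
lemma hasSum_Atilde_row (r j : ℕ) (x : Fin r → ℝ) {M : ℝ}
    (hM : HasSum (fun α : Fin r → ℕ =>
      ((Nat.multinomial Finset.univ α : ℝ)) ^ 2 * ∏ s, x s ^ α s) M)
    (hf0 : ∀ α : Fin r → ℕ,
      0 ≤ ((Nat.multinomial Finset.univ α : ℝ)) ^ 2 * ∏ s, x s ^ α s) :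
    HasSum (fun k : Fin r → ℕ => (Atilde r k j : ℝ) * ∏ s, x s ^ k s) (M ^ (j + 1)) := by
  classical
  set f : (Fin r → ℕ) → ℝ :=
    fun α => ((Nat.multinomial Finset.univ α : ℝ)) ^ 2 * ∏ s, x s ^ α s with hfdef
  have hD := hasSum_prod_pow hM hf0 (j + 1)
  let e1 : (Fin r → Fin (j + 1) → ℕ) ≃ (Fin (j + 1) → Fin r → ℕ) :=
    ⟨Function.swap, Function.swap, fun _ => rfl, fun _ => rfl⟩
  have hD' : HasSum (fun α : Fin r → Fin (j + 1) → ℕ =>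
      ∏ i : Fin (j + 1), f (fun s => α s i)) (M ^ (j + 1)) := by
    exact (e1.hasSum_iff (f := fun β : Fin (j + 1) → Fin r → ℕ => ∏ i, f (β i))
      (a := M ^ (j + 1))).mpr hD
  let σ : (Fin r → Fin (j + 1) → ℕ) → (Fin r → ℕ) := fun α s => ∑ i, α s i
  let e2 := Equiv.sigmaFiberEquiv σ
  have hD'' : HasSum (fun p : Σ k : Fin r → ℕ, {α // σ α = k} =>
      ∏ i : Fin (j + 1), f (fun s => p.2.1 s i)) (M ^ (j + 1)) := by
    exact (e2.hasSum_iff (f := fun α : Fin r → Fin (j + 1) → ℕ =>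
      ∏ i : Fin (j + 1), f (fun s => α s i)) (a := M ^ (j + 1))).mpr hD'
  apply hD''.sigma
  intro k
  have hiff : ∀ α : Fin r → Fin (j + 1) → ℕ,
      α ∈ Fintype.piFinset (fun s : Fin r => Finset.Nat.antidiagonalTuple (j + 1) (k s))
        ↔ σ α = k := by
    intro α
    simp only [Fintype.mem_piFinset, Finset.Nat.mem_antidiagonalTuple]
    exact funext_iff.symm
  haveI inst : Fintype {α : Fin r → Fin (j + 1) → ℕ // σ α = k} :=
    Fintype.subtype (Fintype.piFinset fun s => Finset.Nat.antidiagonalTuple (j + 1) (k s)) hiff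
  have hfin := hasSum_fintype (fun p : {α : Fin r → Fin (j + 1) → ℕ // σ α = k} =>
    ∏ i : Fin (j + 1), f (fun s => p.1 s i))
  convert hfin using 1
  rw [← Finset.sum_subtype (p := fun α : Fin r → Fin (j + 1) → ℕ => σ α = k)
      (Fintype.piFinset fun s => Finset.Nat.antidiagonalTuple (j + 1) (k s)) hiff
      (fun α => ∏ i : Fin (j + 1), f (fun s => α s i))]
  rw [Atilde]
  push_cast
  rw [Finset.sum_mul]
  apply Finset.sum_congr rfl
  intro α hα
  have hk : σ α = k := (hiff α).mp hα
  conv_rhs => rw [Finset.prod_mul_distrib]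
  congr 1
  rw [← hk]
  calc ∏ s, x s ^ σ α s = ∏ s, ∏ i : Fin (j + 1), x s ^ α s i :=
        Finset.prod_congr rfl fun s _ => (Finset.prod_pow_eq_pow_sum _ _ _).symm
    _ = ∏ i : Fin (j + 1), ∏ s, x s ^ α s i := Finset.prod_comm

lemma multinomial_summable (r : ℕ) (x : Fin r → ℝ) (hx0 : ∀ s, 0 ≤ x s)
    (hx : ∑ s : Fin r, Real.sqrt (x s) < 1) :
    Summable (fun α : Fin r → ℕ =>
        ((Nat.multinomial Finset.univ α : ℝ)) ^ 2 * ∏ s : Fin r, x s ^ α s) := by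
  set y : Fin r → ℝ := fun s => Real.sqrt (x s) with hy
  have hy0 : ∀ s, 0 ≤ y s := fun s => Real.sqrt_nonneg _
  set c : ℝ := ∑ s, y s with hc
  have hc0 : 0 ≤ c := Finset.sum_nonneg fun s _ => hy0 s
  have hc1 : c < 1 := hx
  -- pointwise bound
  have key : ∀ α : Fin r → ℕ,
      (Nat.multinomial Finset.univ α : ℝ) * ∏ s, y s ^ α s ≤ c ^ (∑ s, α s) := by
    intro α
    rw [hc, Finset.sum_pow_eq_sum_piAntidiag]
    have hmem : α ∈ Finset.piAntidiag (Finset.univ : Finset (Fin r)) (∑ s, α s) := by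
      simp [Finset.mem_piAntidiag]
    refine Finset.single_le_sum (f := fun k => (Nat.multinomial Finset.univ k : ℝ) *
        ∏ s, y s ^ k s) (fun k _ => ?_) hmem
    positivity
  have hx_eq : ∀ s, x s = y s ^ 2 := fun s => (Real.sq_sqrt (hx0 s)).symm
  have hf_eq : ∀ α : Fin r → ℕ,
      ((Nat.multinomial Finset.univ α : ℝ)) ^ 2 * ∏ s : Fin r, x s ^ α s
        = ((Nat.multinomial Finset.univ α : ℝ) * ∏ s, y s ^ α s) ^ 2 := by
    intro α
    rw [mul_pow, ← Finset.prod_pow]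
    congr 1
    refine Finset.prod_congr rfl fun s _ => ?_
    rw [hx_eq s]; ring
  have hfle : ∀ α : Fin r → ℕ,
      ((Nat.multinomial Finset.univ α : ℝ)) ^ 2 * ∏ s : Fin r, x s ^ α s
        ≤ ∏ s, (c ^ 2) ^ α s := by
    intro α
    rw [hf_eq α]
    have h1 : (0:ℝ) ≤ (Nat.multinomial Finset.univ α : ℝ) * ∏ s, y s ^ α s := by positivity
    calc ((Nat.multinomial Finset.univ α : ℝ) * ∏ s, y s ^ α s) ^ 2
        ≤ (c ^ (∑ s, α s)) ^ 2 := by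
          apply pow_le_pow_left₀ h1 (key α)
      _ = ∏ s, (c ^ 2) ^ α s := by
          rw [← pow_mul, mul_comm, pow_mul, ← Finset.prod_pow_eq_pow_sum]
  set d : ℝ := c ^ 2 with hd
  have hd0 : 0 ≤ d := by positivity
  have hd1 : d < 1 := by nlinarith
  have hdsum : Summable (fun n : ℕ => d ^ n) := summable_geometric_of_lt_one hd0 hd1
  apply summable_of_sum_le (c := ((1 - d)⁻¹) ^ r)
  · intro α
    exact mul_nonneg (by positivity) (Finset.prod_nonneg fun s _ => pow_nonneg (hx0 s) _)
  · intro u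
    set N : ℕ := u.sup (fun α => ∑ s, α s) with hN
    have hsub : u ⊆ Fintype.piFinset (fun _ : Fin r => Finset.range (N + 1)) := by
      intro α hα
      rw [Fintype.mem_piFinset]
      intro s
      rw [Finset.mem_range, Nat.lt_succ_iff]
      calc α s ≤ ∑ t, α t := Finset.single_le_sum (fun t _ => Nat.zero_le _) (Finset.mem_univ s)
        _ ≤ N := Finset.le_sup hα
    calc ∑ α ∈ u, ((Nat.multinomial Finset.univ α : ℝ)) ^ 2 * ∏ s : Fin r, x s ^ α s
        ≤ ∑ α ∈ u, ∏ s, d ^ α s := Finset.sum_le_sum fun α _ => hfle α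
      _ ≤ ∑ α ∈ Fintype.piFinset (fun _ : Fin r => Finset.range (N + 1)), ∏ s, d ^ α s := by
          apply Finset.sum_le_sum_of_subset_of_nonneg hsub
          intro α _ _; positivity
      _ = ∏ s : Fin r, ∑ a ∈ Finset.range (N + 1), d ^ a := by
          rw [Finset.prod_univ_sum]
      _ ≤ ∏ _s : Fin r, (1 - d)⁻¹ := by
          apply Finset.prod_le_prod
          · intro s _
            apply Finset.sum_nonneg; intro a _; positivity
          · intro s _
            calc ∑ a ∈ Finset.range (N + 1), d ^ a
                ≤ ∑' a : ℕ, d ^ a := Summable.sum_le_tsum _ (fun a _ => by positivity) hdsum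
              _ = (1 - d)⁻¹ := tsum_geometric_of_lt_one hd0 hd1
      _ = ((1 - d)⁻¹) ^ r := by
          rw [Finset.prod_const, Finset.card_univ, Fintype.card_fin]


/-- If `√x₁ + ⋯ + √x_r < 1` (with `x_s ≥ 0`) then
`M = Σ_α multinomial(α)² ∏ x_s^{α_s}` converges, and for real `w` with `0 ≤ w·M < 1`,
`Σ_{k,j} Ã_r(k,j) ∏ x_s^{k_s} w^j = 1/(M⁻¹ - w)`. -/
theorem Atilde_generating_function (r : ℕ) (hr : 1 ≤ r) (x : Fin r → ℝ)
    (hx0 : ∀ s, 0 ≤ x s) (hx : ∑ s : Fin r, Real.sqrt (x s) < 1) :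
    Summable (fun α : Fin r → ℕ =>
        ((Nat.multinomial Finset.univ α : ℝ)) ^ 2 * ∏ s : Fin r, x s ^ α s) ∧
    ∀ w : ℝ,
      0 ≤ w * (∑' α : Fin r → ℕ,
          ((Nat.multinomial Finset.univ α : ℝ)) ^ 2 * ∏ s : Fin r, x s ^ α s) →
      w * (∑' α : Fin r → ℕ,
          ((Nat.multinomial Finset.univ α : ℝ)) ^ 2 * ∏ s : Fin r, x s ^ α s) < 1 →
      HasSum
        (fun p : (Fin r → ℕ) × ℕ =>
          (Atilde r p.1 p.2 : ℝ) * (∏ s : Fin r, x s ^ p.1 s) * w ^ p.2)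
        (1 / ((∑' α : Fin r → ℕ,
            ((Nat.multinomial Finset.univ α : ℝ)) ^ 2 * ∏ s : Fin r, x s ^ α s)⁻¹ - w)) := by
  have hsum := multinomial_summable r x hx0 hx
  refine ⟨hsum, ?_⟩
  intro w hw0 hw1
  set M : ℝ := ∑' α : Fin r → ℕ,
      ((Nat.multinomial Finset.univ α : ℝ)) ^ 2 * ∏ s : Fin r, x s ^ α s with hMdef
  have hM : HasSum (fun α : Fin r → ℕ =>
      ((Nat.multinomial Finset.univ α : ℝ)) ^ 2 * ∏ s : Fin r, x s ^ α s) M := hsum.hasSum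
  have hf0 : ∀ α : Fin r → ℕ,
      0 ≤ ((Nat.multinomial Finset.univ α : ℝ)) ^ 2 * ∏ s : Fin r, x s ^ α s := fun α =>
    mul_nonneg (by positivity) (Finset.prod_nonneg fun s _ => pow_nonneg (hx0 s) _)
  have hM1 : 1 ≤ M := by
    have h := le_hasSum hM (fun _ => 0) (fun α _ => hf0 α)
    simpa [Nat.multinomial] using h
  have hM0 : 0 < M := lt_of_lt_of_le one_pos hM1
  have hw0' : 0 ≤ w := by nlinarith
  -- per-j row sums with weight
  have hEwj : ∀ j : ℕ, HasSum
      (fun k : Fin r → ℕ => (Atilde r k j : ℝ) * (∏ s, x s ^ k s) * w ^ j)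
      (M ^ (j + 1) * w ^ j) := fun j => (hasSum_Atilde_row r j x hM hf0).mul_right _
  -- geometric sum
  have hne : (1 : ℝ) - w * M ≠ 0 := by nlinarith
  have hgeo : HasSum (fun j : ℕ => M ^ (j + 1) * w ^ j) (1 / (M⁻¹ - w)) := by
    have h := (hasSum_geometric_of_lt_one hw0 hw1).mul_left M
    have heq : (fun j : ℕ => M * (w * M) ^ j) = fun j : ℕ => M ^ (j + 1) * w ^ j := by
      funext j; rw [mul_pow]; ring
    have hval : M * (1 - w * M)⁻¹ = 1 / (M⁻¹ - w) := by
      have h1 : M⁻¹ - w = (1 - w * M) / M := by field_simp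
      rw [h1, one_div_div, div_eq_mul_inv]
    rw [heq, hval] at h
    exact h
  -- sigma assembly
  have hnn : ∀ p : Σ _ : ℕ, Fin r → ℕ,
      0 ≤ (Atilde r p.2 p.1 : ℝ) * (∏ s, x s ^ p.2 s) * w ^ p.1 := by
    intro p
    apply mul_nonneg (mul_nonneg (Nat.cast_nonneg _)
      (Finset.prod_nonneg fun s _ => pow_nonneg (hx0 s) _)) (pow_nonneg hw0' _)
  have hsummable : Summable (fun p : Σ _ : ℕ, Fin r → ℕ =>
      (Atilde r p.2 p.1 : ℝ) * (∏ s, x s ^ p.2 s) * w ^ p.1) := by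
    rw [summable_sigma_of_nonneg hnn]
    refine ⟨fun j => (hEwj j).summable, ?_⟩
    have : (fun j : ℕ => ∑' k : Fin r → ℕ,
        (Atilde r k j : ℝ) * (∏ s, x s ^ k s) * w ^ j)
        = fun j : ℕ => M ^ (j + 1) * w ^ j := funext fun j => (hEwj j).tsum_eq
    rw [this]
    exact hgeo.summable
  have hsigma : HasSum (fun p : Σ _ : ℕ, Fin r → ℕ =>
      (Atilde r p.2 p.1 : ℝ) * (∏ s, x s ^ p.2 s) * w ^ p.1) (1 / (M⁻¹ - w)) :=
    HasSum.sigma_of_hasSum hgeo (fun j => hEwj j) hsummable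
  let e3 : (Σ _ : ℕ, Fin r → ℕ) ≃ ((Fin r → ℕ) × ℕ) :=
    (Equiv.sigmaEquivProd ℕ (Fin r → ℕ)).trans (Equiv.prodComm ℕ (Fin r → ℕ))
  exact (e3.hasSum_iff (f := fun p : (Fin r → ℕ) × ℕ =>
    (Atilde r p.1 p.2 : ℝ) * (∏ s, x s ^ p.1 s) * w ^ p.2) (a := 1 / (M⁻¹ - w))).mp hsigma
end
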